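/- Let X be a random variable with |X| ≤ M almost surely for some M > 0, let N ~ N(0,1) be independent of X, let Y = X + N have density p_Y = e^{−Q} with Q′(y) = y − E[X | Y = y]. If a > 0 and n ≥ 1 satisfy n = (2/π) ∫₀¹ a t Q′(a t)/√(1−t²) dt (i.e., a is the n-th Mhaskar–Rakhmanov–Saff number of Q), then a ≤ (2M + √2) √n. In particular, for every z ≥ 0 one has ∫₀¹ z t Q′(z t)/√(1−t²) dt ≥ (π/4) z² − M z. -/

import Mathlib

open MeasureTheory ProbabilityTheory Real Filter

/-! Differentiating `p_Y(y) ∝ E[exp(-(y - X)²/2)]` under the expectation gives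
`Q'(y) = y - E[X | Y = y]`, and the posterior mean is an average of values of `X`, so
`|Q'(y) - y| ≤ M`. Inserting `Q'(zt) ≥ zt - M` into the Mhaskar–Rakhmanov–Saff integral and
using `∫₀¹ t²/√(1-t²) dt = π/4`, `∫₀¹ t/√(1-t²) dt = 1` gives the lower bound `(π/4) z² - M z`.
At `z = a` this reads `a²/2 - M a ≤ n`, and solving the quadratic inequality bounds `a`. -/

section ArcsineWeight

open Set intervalIntegral

lemma intervalIntegrable_inv_sqrt_one_sub_sq :
    IntervalIntegrable (fun t : ℝ => (√(1 - t ^ 2))⁻¹) volume 0 1 := by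
  have hsing0 : IntervalIntegrable (fun t : ℝ => t ^ (-(1 / 2) : ℝ)) volume 0 1 :=
    intervalIntegrable_rpow' (by norm_num)
  have hsing1 : IntervalIntegrable (fun t : ℝ => (1 - t) ^ (-(1 / 2) : ℝ)) volume 0 1 := by
    simpa using (hsing0.comp_sub_left 1).symm
  refine hsing1.mono_fun (by fun_prop) ?_
  rw [uIoc_of_le zero_le_one]
  filter_upwards [ae_restrict_mem measurableSet_Ioc] with t ⟨ht0, ht1⟩
  have h1t : 0 ≤ 1 - t := by linarith
  rw [norm_of_nonneg (by positivity), norm_of_nonneg (by positivity), rpow_neg h1t,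
    ← sqrt_eq_rpow]
  rcases ht1.eq_or_lt with rfl | ht1
  · simp
  · exact inv_anti₀ (sqrt_pos.mpr (by linarith)) (sqrt_le_sqrt (by nlinarith))

lemma intervalIntegrable_div_sqrt_one_sub_sq_of_abs_le {f : ℝ → ℝ} (hf : Measurable f) {C : ℝ}
    (hC : ∀ t ∈ Ioc (0 : ℝ) 1, |f t| ≤ C) :
    IntervalIntegrable (fun t => f t / √(1 - t ^ 2)) volume 0 1 := by
  refine (intervalIntegrable_inv_sqrt_one_sub_sq.const_mul C).mono_fun
    (hf.div (by fun_prop)).aestronglyMeasurable ?_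
  rw [uIoc_of_le zero_le_one]
  filter_upwards [ae_restrict_mem measurableSet_Ioc] with t ht
  have hinv : 0 ≤ (√(1 - t ^ 2))⁻¹ := inv_nonneg.mpr (sqrt_nonneg _)
  rw [norm_eq_abs, norm_eq_abs, div_eq_mul_inv, abs_mul, abs_of_nonneg hinv]
  exact (mul_le_mul_of_nonneg_right (hC t ht) hinv).trans (le_abs_self _)

lemma intervalIntegrable_div_sqrt_one_sub_sq :
    IntervalIntegrable (fun t : ℝ => t / √(1 - t ^ 2)) volume 0 1 :=
  intervalIntegrable_div_sqrt_one_sub_sq_of_abs_le measurable_id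
    fun _ ht => (abs_of_pos ht.1).trans_le ht.2

lemma intervalIntegrable_sq_div_sqrt_one_sub_sq :
    IntervalIntegrable (fun t : ℝ => t ^ 2 / √(1 - t ^ 2)) volume 0 1 :=
  intervalIntegrable_div_sqrt_one_sub_sq_of_abs_le (C := 1) (measurable_id.pow_const 2)
    fun t ht => by rw [abs_of_nonneg (sq_nonneg t)]; nlinarith [ht.1, ht.2]

lemma hasDerivAt_sqrt_one_sub_sq {x : ℝ} (hx : x ^ 2 < 1) :
    HasDerivAt (fun t : ℝ => √(1 - t ^ 2)) (-x / √(1 - x ^ 2)) x := by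
  have h := ((hasDerivAt_pow 2 x).const_sub 1).sqrt (by linarith)
  convert h using 1
  have : √(1 - x ^ 2) ≠ 0 := (sqrt_pos.mpr (by linarith)).ne'
  field_simp
  ring

lemma integral_div_sqrt_one_sub_sq : ∫ t in (0 : ℝ)..1, t / √(1 - t ^ 2) = 1 := by
  have h := integral_eq_sub_of_hasDeriv_right_of_le zero_le_one
    (f := fun t : ℝ => -√(1 - t ^ 2)) (by fun_prop)
    (fun x hx => ((hasDerivAt_sqrt_one_sub_sq (by nlinarith [hx.1, hx.2])).neg.congr_deriv
      (by ring)).hasDerivWithinAt)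
    intervalIntegrable_div_sqrt_one_sub_sq
  simpa using h

lemma integral_sq_div_sqrt_one_sub_sq : ∫ t in (0 : ℝ)..1, t ^ 2 / √(1 - t ^ 2) = π / 4 := by
  have hderiv : ∀ x ∈ Ioo (0 : ℝ) 1, HasDerivAt (fun t => (arcsin t - t * √(1 - t ^ 2)) / 2)
      (x ^ 2 / √(1 - x ^ 2)) x := by
    intro x ⟨hx0, hx1⟩
    have h : HasDerivAt (fun t => (arcsin t - t * √(1 - t ^ 2)) / 2) _ x :=
      ((hasDerivAt_arcsin (by linarith) hx1.ne).sub
        ((hasDerivAt_id' x).mul (hasDerivAt_sqrt_one_sub_sq (by nlinarith)))).div_const 2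
    refine h.congr_deriv ?_
    have hpos : 0 < √(1 - x ^ 2) := sqrt_pos.mpr (by nlinarith)
    have hsq : √(1 - x ^ 2) ^ 2 = 1 - x ^ 2 := sq_sqrt (by nlinarith)
    field_simp
    nlinarith [hsq]
  have h := integral_eq_sub_of_hasDeriv_right_of_le zero_le_one (by fun_prop)
    (fun x hx => (hderiv x hx).hasDerivWithinAt) intervalIntegrable_sq_div_sqrt_one_sub_sq
  rw [h]
  simp only [arcsin_one, arcsin_zero]
  norm_num
  ring

end ArcsineWeight

lemma abs_mul_exp_neg_sq_div_two_le_one (s : ℝ) : |s| * exp (-s ^ 2 / 2) ≤ 1 := by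
  have hs : |s| ≤ exp (s ^ 2 / 2) := by
    nlinarith [add_one_le_exp (s ^ 2 / 2), sq_abs s, sq_nonneg (|s| - 1)]
  calc |s| * exp (-s ^ 2 / 2) ≤ exp (s ^ 2 / 2) * exp (-s ^ 2 / 2) := by gcongr
    _ = 1 := by rw [← exp_add]; ring_nf; exact exp_zero

section GaussianConvolution

variable {Ω : Type*} [MeasurableSpace Ω] {μ : Measure Ω} [IsFiniteMeasure μ] {X : Ω → ℝ}

/-- `E[X | X + N = y]` for `N ~ N(0,1)` independent of `X`, by Bayes' rule. -/
noncomputable def posteriorMean (μ : Measure Ω) (X : Ω → ℝ) (y : ℝ) : ℝ :=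
  (∫ ω, X ω * exp (-(y - X ω) ^ 2 / 2) ∂μ) / ∫ ω, exp (-(y - X ω) ^ 2 / 2) ∂μ

lemma integrable_exp_neg_sq_sub_div_two (hX : Measurable X) (y : ℝ) :
    Integrable (fun ω => exp (-(y - X ω) ^ 2 / 2)) μ := by
  refine (integrable_const (1 : ℝ)).mono' (by fun_prop) (ae_of_all _ fun ω => ?_)
  rw [norm_of_nonneg (exp_pos _).le, exp_le_one_iff]
  nlinarith [sq_nonneg (y - X ω)]

lemma integrable_sub_mul_exp_neg_sq_sub_div_two (hX : Measurable X) (y : ℝ) :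
    Integrable (fun ω => (y - X ω) * exp (-(y - X ω) ^ 2 / 2)) μ := by
  refine (integrable_const (1 : ℝ)).mono' (by fun_prop) (ae_of_all _ fun ω => ?_)
  rw [norm_mul, norm_of_nonneg (exp_pos _).le, norm_eq_abs]
  exact abs_mul_exp_neg_sq_div_two_le_one _

lemma hasDerivAt_integral_exp_neg_sq_sub_div_two (hX : Measurable X) (y : ℝ) :
    HasDerivAt (fun u => ∫ ω, exp (-(u - X ω) ^ 2 / 2) ∂μ)
      (∫ ω, -((y - X ω) * exp (-(y - X ω) ^ 2 / 2)) ∂μ) y := by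
  refine (hasDerivAt_integral_of_dominated_loc_of_deriv_le (bound := fun _ => 1)
    (F' := fun u ω => -((u - X ω) * exp (-(u - X ω) ^ 2 / 2))) univ_mem
    (Eventually.of_forall fun u => (integrable_exp_neg_sq_sub_div_two hX u).1)
    (integrable_exp_neg_sq_sub_div_two hX y)
    (integrable_sub_mul_exp_neg_sq_sub_div_two hX y).neg.1
    (ae_of_all _ fun ω u _ => ?_) (integrable_const 1) (ae_of_all _ fun ω u _ => ?_)).2
  · rw [norm_neg, norm_mul, norm_of_nonneg (exp_pos _).le, norm_eq_abs]
    exact abs_mul_exp_neg_sq_div_two_le_one _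
  · have h : HasDerivAt (fun v => -(v - X ω) ^ 2 / 2) (-(u - X ω)) u :=
      ((((hasDerivAt_id u).sub_const (X ω)).pow 2).neg.div_const 2).congr_deriv
        (by simp only [id_eq]; ring)
    exact h.exp.congr_deriv (by ring)

variable [NeZero μ]

lemma hasDerivAt_neg_log_const_mul_integral_exp_neg_sq_sub_div_two (hX : Measurable X)
    {c : ℝ} (hc : 0 < c) (y : ℝ) :
    HasDerivAt (fun u => -log (c * ∫ ω, exp (-(u - X ω) ^ 2 / 2) ∂μ))
      (y - posteriorMean μ X y) y := by
  have hg := integral_exp_pos (μ := μ) (integrable_exp_neg_sq_sub_div_two hX y)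
  have hlog := ((hasDerivAt_integral_exp_neg_sq_sub_div_two (μ := μ) hX y).const_mul c).log
    (mul_pos hc hg).ne'
  refine hlog.neg.congr_deriv ?_
  have hsplit : ∫ ω, X ω * exp (-(y - X ω) ^ 2 / 2) ∂μ =
      y * (∫ ω, exp (-(y - X ω) ^ 2 / 2) ∂μ) -
        ∫ ω, (y - X ω) * exp (-(y - X ω) ^ 2 / 2) ∂μ := by
    rw [← integral_const_mul, ← integral_sub ((integrable_exp_neg_sq_sub_div_two hX y).const_mul y)
      (integrable_sub_mul_exp_neg_sq_sub_div_two hX y)]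
    congr 1 with ω
    ring
  rw [posteriorMean, hsplit, integral_neg]
  generalize ∫ ω, (y - X ω) * exp (-(y - X ω) ^ 2 / 2) ∂μ = A
  generalize ∫ ω, exp (-(y - X ω) ^ 2 / 2) ∂μ = g at hg ⊢
  field_simp
  ring

lemma abs_posteriorMean_le (hX : Measurable X) {M : ℝ} (hXM : ∀ᵐ ω ∂μ, |X ω| ≤ M) (y : ℝ) :
    |posteriorMean μ X y| ≤ M := by
  have hg := integral_exp_pos (μ := μ) (integrable_exp_neg_sq_sub_div_two hX y)
  have hnum : ‖∫ ω, X ω * exp (-(y - X ω) ^ 2 / 2) ∂μ‖ ≤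
      ∫ ω, M * exp (-(y - X ω) ^ 2 / 2) ∂μ := by
    refine norm_integral_le_of_norm_le
      ((integrable_exp_neg_sq_sub_div_two (μ := μ) hX y).const_mul M) ?_
    filter_upwards [hXM] with ω hω
    rw [norm_mul, norm_of_nonneg (exp_pos _).le, norm_eq_abs]
    exact mul_le_mul_of_nonneg_right hω (exp_pos _).le
  rw [posteriorMean, abs_div, abs_of_pos hg, div_le_iff₀ hg, ← norm_eq_abs]
  rwa [integral_const_mul] at hnum

end GaussianConvolution

noncomputable def mrsIntegral (Q : ℝ → ℝ) (a : ℝ) : ℝ :=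
  ∫ t in (0 : ℝ)..1, a * t * deriv Q (a * t) / √(1 - t ^ 2)

lemma le_mrsIntegral {Q : ℝ → ℝ} {M : ℝ} (hQ : ∀ y, 0 ≤ y → |deriv Q y - y| ≤ M) {z : ℝ}
    (hz : 0 ≤ z) : π / 4 * z ^ 2 - M * z ≤ mrsIntegral Q z := by
  have hintegrable : IntervalIntegrable
      (fun t => z * t * deriv Q (z * t) / √(1 - t ^ 2)) volume 0 1 := by
    refine intervalIntegrable_div_sqrt_one_sub_sq_of_abs_le (C := z * (z + M))
      (by fun_prop) fun t ⟨ht0, ht1⟩ => ?_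
    have hzt : 0 ≤ z * t := mul_nonneg hz ht0.le
    have hQzt := abs_le.mp (hQ (z * t) hzt)
    have hM : 0 ≤ M := (abs_nonneg _).trans (hQ 0 le_rfl)
    rw [abs_mul, abs_of_nonneg hzt]
    calc z * t * |deriv Q (z * t)| ≤ z * t * (z * t + M) :=
          mul_le_mul_of_nonneg_left (abs_le.mpr ⟨by linarith, by linarith⟩) hzt
      _ ≤ z * (z + M) := by
          have hzt' : z * t ≤ z := mul_le_of_le_one_right hz ht1
          nlinarith
  calc π / 4 * z ^ 2 - M * z
      = ∫ t in (0 : ℝ)..1, z ^ 2 * (t ^ 2 / √(1 - t ^ 2)) - M * z * (t / √(1 - t ^ 2)) := by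
        rw [intervalIntegral.integral_sub (intervalIntegrable_sq_div_sqrt_one_sub_sq.const_mul _)
          (intervalIntegrable_div_sqrt_one_sub_sq.const_mul _),
          intervalIntegral.integral_const_mul, intervalIntegral.integral_const_mul,
          integral_sq_div_sqrt_one_sub_sq, integral_div_sqrt_one_sub_sq]
        ring
    _ ≤ mrsIntegral Q z := by
        refine intervalIntegral.integral_mono_on zero_le_one
          ((intervalIntegrable_sq_div_sqrt_one_sub_sq.const_mul _).sub
            (intervalIntegrable_div_sqrt_one_sub_sq.const_mul _)) hintegrable fun t ⟨ht0, _⟩ => ?_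
        have hzt : 0 ≤ z * t := mul_nonneg hz ht0
        have hQzt := (abs_le.mp (hQ (z * t) hzt)).1
        rw [← mul_div_assoc, ← mul_div_assoc, ← sub_div]
        gcongr
        nlinarith

lemma le_mul_sqrt_of_sq_div_two_sub_mul_le {a M n : ℝ} (hM : 0 ≤ M) (hn : 1 ≤ n)
    (h : a ^ 2 / 2 - M * a ≤ n) : a ≤ (2 * M + √2) * √n := by
  have hs : 1 ≤ √n := one_le_sqrt.mpr hn
  by_contra! ha
  have h1 : √2 * √n < a - 2 * M := by linarith [mul_nonneg hM (sub_nonneg.mpr hs)]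
  have h2 : √2 * √n < a := by linarith
  have h3 : (√2 * √n) * (√2 * √n) < a * (a - 2 * M) :=
    mul_lt_mul'' h2 h1 (by positivity) (by positivity)
  have h4 : (√2 * √n) * (√2 * √n) = 2 * n := by
    rw [mul_mul_mul_comm, mul_self_sqrt zero_le_two, mul_self_sqrt (by linarith)]
  linarith

theorem mhaskar_rakhmanov_saff_bound_general
    {Ω : Type*} [MeasurableSpace Ω] (μ : Measure Ω) [IsProbabilityMeasure μ]
    (X : Ω → ℝ) (hXmeas : Measurable X)
    (M : ℝ) (hM : 0 < M) (hXbdd : ∀ᵐ ω ∂μ, |X ω| ≤ M)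
    (pY Q : ℝ → ℝ)
    (hpY : ∀ y, pY y = (Real.sqrt (2 * π))⁻¹ * ∫ ω, Real.exp (-(y - X ω) ^ 2 / 2) ∂μ)
    (hQ : ∀ y, Q y = -Real.log (pY y))
    (a : ℝ) (ha : 0 < a) (n : ℕ) (hn : 1 ≤ n)
    (hMRS : (n : ℝ) = (2 / π) *
      ∫ t in (0 : ℝ)..1, a * t * deriv Q (a * t) / Real.sqrt (1 - t ^ 2)) :
    a ≤ (2 * M + Real.sqrt 2) * Real.sqrt n ∧
    ∀ z : ℝ, 0 ≤ z →
      (π / 4) * z ^ 2 - M * z ≤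
        ∫ t in (0 : ℝ)..1, z * t * deriv Q (z * t) / Real.sqrt (1 - t ^ 2) := by
  have hQ_eq : Q = fun u => -log ((√(2 * π))⁻¹ * ∫ ω, exp (-(u - X ω) ^ 2 / 2) ∂μ) := by
    funext u
    rw [hQ, hpY]
  have hderiv : ∀ y, 0 ≤ y → |deriv Q y - y| ≤ M := fun y _ => by
    rw [hQ_eq, (hasDerivAt_neg_log_const_mul_integral_exp_neg_sq_sub_div_two hXmeas
      (by positivity) y).deriv, sub_sub_cancel_left, abs_neg]
    exact abs_posteriorMean_le hXmeas hXbdd y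
  have hlower : ∀ z, 0 ≤ z → π / 4 * z ^ 2 - M * z ≤ mrsIntegral Q z :=
    fun z hz => le_mrsIntegral hderiv hz
  refine ⟨le_mul_sqrt_of_sq_div_two_sub_mul_le hM.le (by exact_mod_cast hn) ?_, hlower⟩
  have hπ : 2 / π ≤ 1 := (div_le_one pi_pos).mpr two_le_pi
  calc a ^ 2 / 2 - M * a ≤ a ^ 2 / 2 - 2 / π * (M * a) :=
        sub_le_sub_left (mul_le_of_le_one_left (by positivity) hπ) _
    _ = 2 / π * (π / 4 * a ^ 2 - M * a) := by field_simp; ring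
    _ ≤ 2 / π * mrsIntegral Q a := by gcongr; exact hlower a ha.le
    _ = n := hMRS.symm

/-- **Bound on the Mhaskar–Rakhmanov–Saff number of the output density.**
Let `|X| ≤ M` a.s. with `M > 0`, `N ~ N(0,1)` independent of `X`, and let `Y = X + N`
have density `p_Y = e^{-Q}`, `p_Y(y) = (1/√(2π)) E[exp(-(y-X)²/2)]`. If `a > 0` and
`n ≥ 1` satisfy `n = (2/π) ∫₀¹ a t Q'(a t)/√(1-t²) dt` (i.e., `a` is the `n`-th
Mhaskar–Rakhmanov–Saff number of `Q`), then `a ≤ (2M + √2)√n`. In particular, for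
every `z ≥ 0`, `∫₀¹ z t Q'(z t)/√(1-t²) dt ≥ (π/4) z² - M z`. -/
theorem mhaskar_rakhmanov_saff_bound
    {Ω : Type*} [MeasurableSpace Ω] (μ : Measure Ω) [IsProbabilityMeasure μ]
    (X N : Ω → ℝ) (hXmeas : Measurable X) (hNmeas : Measurable N)
    (M : ℝ) (hM : 0 < M) (hXbdd : ∀ᵐ ω ∂μ, |X ω| ≤ M)
    (hN : Measure.map N μ = gaussianReal 0 1)
    (hindep : IndepFun X N μ)
    (pY Q : ℝ → ℝ)
    (hpY : ∀ y, pY y = (Real.sqrt (2 * π))⁻¹ * ∫ ω, Real.exp (-(y - X ω) ^ 2 / 2) ∂μ)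
    (hQ : ∀ y, Q y = -Real.log (pY y))
    (a : ℝ) (ha : 0 < a) (n : ℕ) (hn : 1 ≤ n)
    (hMRS : (n : ℝ) = (2 / π) *
      ∫ t in (0 : ℝ)..1, a * t * deriv Q (a * t) / Real.sqrt (1 - t ^ 2)) :
    a ≤ (2 * M + Real.sqrt 2) * Real.sqrt n ∧
    ∀ z : ℝ, 0 ≤ z →
      (π / 4) * z ^ 2 - M * z ≤
        ∫ t in (0 : ℝ)..1, z * t * deriv Q (z * t) / Real.sqrt (1 - t ^ 2) :=
  mhaskar_rakhmanov_saff_bound_general μ X hXmeas M hM hXbdd pY Q hpY hQ a ha n hn hMRS
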